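/- Assume (HS1) and (HS2) hold and pick r̄ ∈ (0,1) so that (HS3_r̄), (HW1_r̄) and (HW2_r̄) are satisfied. Fix an integer q ≥ 1 and a constant θ ∈ q^{-1}{1,…,q} with gcd(θq, q) = 1. Then there exists λ* ∈ (0, λ̃] such that for every λ ∈ ℂ with Re λ > −λ*, every ρ ∈ [0,1], and every y ∈ ℝ, the characteristic operator Δ_{q,θ,ρ;λ}(iy) on the complexification of ℓ²_{q,⊥;∞} is injective (equivalently, its determinant is nonzero). -/

import Mathlib

open MeasureTheory Filter Topology

noncomputable section

/-- Vectors in `ℝ^d`. -/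
abbrev Vec (d : ℕ) := Fin d → ℝ

/-- Vectors in `ℂ^d`. -/
abbrev VecC (d : ℕ) := Fin d → ℂ

variable {d : ℕ}

/-- Euclidean dot product on `ℝ^d`. -/
def dotV {d : ℕ} (x y : Vec d) : ℝ := ∑ i, x i * y i

/-- The spatial mixed-difference operator `Δ₀` with (diagonal) coefficients `α` and constant `τ`:
`(Δ₀ F)(ξ) = τ Σ_{m>0} α_m [F(ξ+m) + F(ξ-m) - 2 F(ξ)]`. -/
def Δ0op {d : ℕ} (τ : ℝ) (α : ℕ → Vec d) (F : ℝ → Vec d) : ℝ → Vec d :=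
  fun ξ i => τ * ∑' m : ℕ, α (m + 1) i *
    (F (ξ + ((m : ℝ) + 1)) i + F (ξ - ((m : ℝ) + 1)) i - 2 * F ξ i)

/-- Complexification of `Δ₀`. -/
def Δ0opC {d : ℕ} (τ : ℝ) (α : ℕ → Vec d) (F : ℝ → VecC d) : ℝ → VecC d :=
  fun ξ i => (τ : ℂ) * ∑' m : ℕ, ((α (m + 1) i : ℝ) : ℂ) *
    (F (ξ + ((m : ℝ) + 1)) i + F (ξ - ((m : ℝ) + 1)) i - 2 * F ξ i)

/-- Assumption (HS1).  The matrices `α_m` are encoded by their diagonals `α m : ℝ^d`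
(indexed so that `α (m+1)` is the coefficient `α_{m+1}`, `m ≥ 0`). -/
structure HS1 (d ddiff : ℕ) (τ : ℝ) (α : ℕ → Vec d) (ν : ℝ) : Prop where
  τ_pos : 0 < τ
  ddiff_pos : 1 ≤ ddiff
  ddiff_le : ddiff ≤ d
  ν_pos : 0 < ν
  diff_nonzero : ∀ i : Fin d, (i : ℕ) < ddiff → ∃ m : ℕ, α (m + 1) i ≠ 0
  nondiff_zero : ∀ i : Fin d, ddiff ≤ (i : ℕ) → ∀ m : ℕ, α (m + 1) i = 0
  exp_summable : Summable (fun m : ℕ => ‖α (m + 1)‖ * Real.exp (((m : ℝ) + 1) * ν))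
  second_moment : ∀ i : Fin d, (i : ℕ) < ddiff →
    ∑' m : ℕ, α (m + 1) i * ((m : ℝ) + 1) ^ 2 = 1
  A_pos : ∀ i : Fin d, (i : ℕ) < ddiff → ∀ z : ℝ, 0 < z → z < 2 * Real.pi →
    0 < ∑' m : ℕ, α (m + 1) i * (1 - Real.cos (((m : ℝ) + 1) * z))

/-- Assumption (HS2): `G : ℝ^d × (0,1) → ℝ^d` is `C²` and `G(P^±; r) = 0` for all `r ∈ (0,1)`. -/
structure HS2 (d : ℕ) (G : Vec d → ℝ → Vec d) (Pm Pp : Vec d) : Prop where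
  smooth : ContDiffOn ℝ 2 (fun z : Vec d × ℝ => G z.1 z.2) (Set.univ ×ˢ Set.Ioo (0:ℝ) 1)
  zero_m : ∀ r ∈ Set.Ioo (0:ℝ) 1, G Pm r = 0
  zero_p : ∀ r ∈ Set.Ioo (0:ℝ) 1, G Pp r = 0

/-- The Jacobian `D_U G(U; r)` as a `d × d` matrix. -/
def DUG {d : ℕ} (G : Vec d → ℝ → Vec d) (U : Vec d) (r : ℝ) : Matrix (Fin d) (Fin d) ℝ :=
  fun i j => fderiv ℝ (fun V => G V r i) U (Pi.single j 1)

/-- A (not necessarily symmetric) real matrix is positive definite if `xᵀ M x > 0` for `x ≠ 0`. -/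
def PosDefQ {d : ℕ} (M : Matrix (Fin d) (Fin d) ℝ) : Prop :=
  ∀ x : Vec d, x ≠ 0 → 0 < dotV x (M.mulVec x)

/-- `x` is supported in the first `ddiff` coordinates. -/
def SuppFirst (d ddiff : ℕ) (x : Vec d) : Prop := ∀ i : Fin d, ddiff ≤ (i : ℕ) → x i = 0

/-- `x` is supported in the last `d - ddiff` coordinates. -/
def SuppLast (d ddiff : ℕ) (x : Vec d) : Prop := ∀ i : Fin d, (i : ℕ) < ddiff → x i = 0

/-- Alternative (a) of assumption (HS3). -/
def HS3a {d : ℕ} (G : Vec d → ℝ → Vec d) (Pm Pp : Vec d) (r : ℝ) : Prop :=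
  PosDefQ (-(DUG G Pm r)) ∧ PosDefQ (-(DUG G Pp r))

/-- Alternative (b) of assumption (HS3): the blocks `−G^{[1,1]}(P^±)` and `−G^{[2,2]}(P^±)` are
positive definite (expressed via vectors supported on the corresponding blocks) and
`G^{[1,2]}(U) = −Γ G^{[2,1]}(U)ᵀ` for some `Γ > 0`. -/
def HS3b {d : ℕ} (ddiff : ℕ) (G : Vec d → ℝ → Vec d) (Pm Pp : Vec d) (r : ℝ) : Prop :=
  (∀ P ∈ ({Pm, Pp} : Set (Vec d)),
    (∀ x : Vec d, x ≠ 0 → SuppFirst d ddiff x → 0 < dotV x ((-(DUG G P r)).mulVec x)) ∧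
    (∀ x : Vec d, x ≠ 0 → SuppLast d ddiff x → 0 < dotV x ((-(DUG G P r)).mulVec x))) ∧
  ∃ Γ : ℝ, 0 < Γ ∧ ∀ U : Vec d, ∀ i j : Fin d, (i : ℕ) < ddiff → ddiff ≤ (j : ℕ) →
    DUG G U r i j = -Γ * DUG G U r j i

/-- Assumption (HS3): one of the two alternatives holds. -/
def HS3 {d : ℕ} (ddiff : ℕ) (G : Vec d → ℝ → Vec d) (Pm Pp : Vec d) (r : ℝ) : Prop :=
  HS3a G Pm Pp r ∨ HS3b ddiff G Pm Pp r

/-- `F ∈ H¹(ℝ; ℝ^d)` with (a.e./weak) derivative `F'`: `F` is an indefinite integral of `F'`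
and both belong to `L²`. -/
structure IsH1 {d : ℕ} (F F' : ℝ → Vec d) : Prop where
  fund : ∀ a b : ℝ, F b - F a = ∫ t in a..b, F' t
  memF : MemLp F 2 volume
  memF' : MemLp F' 2 volume

/-- Complex version of `IsH1`. -/
structure IsH1C {d : ℕ} (F F' : ℝ → VecC d) : Prop where
  fund : ∀ a b : ℝ, F b - F a = ∫ t in a..b, F' t
  memF : MemLp F 2 volume
  memF' : MemLp F' 2 volume

/-- The `L²(ℝ;ℝ^d)` pairing. -/
def innerL2 {d : ℕ} (F G : ℝ → Vec d) : ℝ := ∫ ξ : ℝ, dotV (F ξ) (G ξ)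

/-- The operator `L₀ F = c̄₀ F' − Δ₀ F − D_U G(Ū₀(·); r̄) F`, evaluated on a pair `(F, F')`. -/
def L0op {d : ℕ} (τ c0 : ℝ) (α : ℕ → Vec d) (G : Vec d → ℝ → Vec d) (U0 : ℝ → Vec d)
    (r : ℝ) (F F' : ℝ → Vec d) : ℝ → Vec d :=
  fun ξ => c0 • F' ξ - Δ0op τ α F ξ - (DUG G (U0 ξ) r).mulVec (F ξ)

/-- The formal adjoint `L₀* F = −c̄₀ F' − Δ₀ F − D_U G(Ū₀(·); r̄)ᵀ F`. -/
def L0starop {d : ℕ} (τ c0 : ℝ) (α : ℕ → Vec d) (G : Vec d → ℝ → Vec d) (U0 : ℝ → Vec d)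
    (r : ℝ) (F F' : ℝ → Vec d) : ℝ → Vec d :=
  fun ξ => (-c0) • F' ξ - Δ0op τ α F ξ - (DUG G (U0 ξ) r).transpose.mulVec (F ξ)

/-- Complexification of `L₀ + λ`. -/
def L0opC {d : ℕ} (τ c0 : ℝ) (α : ℕ → Vec d) (G : Vec d → ℝ → Vec d) (U0 : ℝ → Vec d)
    (r : ℝ) (lam : ℂ) (F F' : ℝ → VecC d) : ℝ → VecC d :=
  fun ξ i => (c0 : ℂ) * F' ξ i - Δ0opC τ α F ξ i
    - ∑ j, ((DUG G (U0 ξ) r i j : ℝ) : ℂ) * F ξ j + lam * F ξ i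

/-- Bijectivity (in the a.e. sense) of the complexification of `L₀ + λ` from `H¹` to `L²`. -/
def L0CBijective {d : ℕ} (τ c0 : ℝ) (α : ℕ → Vec d) (G : Vec d → ℝ → Vec d)
    (U0 : ℝ → Vec d) (r : ℝ) (lam : ℂ) : Prop :=
  (∀ H : ℝ → VecC d, MemLp H 2 volume →
    ∃ F F' : ℝ → VecC d, IsH1C F F' ∧
      ∀ᵐ ξ ∂(volume : Measure ℝ), L0opC τ c0 α G U0 r lam F F' ξ = H ξ) ∧
  (∀ F F' : ℝ → VecC d, IsH1C F F' →
    (∀ᵐ ξ ∂(volume : Measure ℝ), L0opC τ c0 α G U0 r lam F F' ξ = 0) →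
    (∀ᵐ ξ ∂(volume : Measure ℝ), F ξ = 0))

/-- Assumption (HW1): existence of the travelling wave `(c̄₀, Ū₀)` for the LDE, with
`Ū₀' = U0'` its (continuous) derivative. -/
structure HW1 {d : ℕ} (τ : ℝ) (α : ℕ → Vec d) (G : Vec d → ℝ → Vec d) (Pm Pp : Vec d)
    (r c0 : ℝ) (U0 U0' : ℝ → Vec d) : Prop where
  c0_ne : c0 ≠ 0
  deriv : ∀ ξ : ℝ, HasDerivAt U0 (U0' ξ) ξ
  cont_deriv : Continuous U0'
  bounded : ∃ C : ℝ, ∀ ξ : ℝ, ‖U0 ξ‖ ≤ C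
  eqn : ∀ ξ : ℝ, c0 • U0' ξ = Δ0op τ α U0 ξ + G (U0 ξ) r
  lim_p : Tendsto U0 atTop (nhds Pp)
  lim_m : Tendsto U0 atBot (nhds Pm)

/-- Assumption (HW2): the spectral stability assumption on `L₀`. -/
structure HW2 {d : ℕ} (τ c0 : ℝ) (α : ℕ → Vec d) (G : Vec d → ℝ → Vec d)
    (U0 U0' : ℝ → Vec d) (r : ℝ) (Φp Φp' Φm Φm' : ℝ → Vec d) (lamT : ℝ) : Prop where
  lamT_pos : 0 < lamT
  h1p : IsH1 Φp Φp'
  h1m : IsH1 Φm Φm'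
  eq_deriv : Φp = U0'
  normalisation : innerL2 Φp Φm = 1
  spec : ∀ lam : ℂ, -lamT ≤ lam.re →
    (L0CBijective τ c0 α G U0 r lam ↔
      ¬ ∃ m : ℤ, lam = 2 * Real.pi * Complex.I * c0 * m)
  eig : ∀ lam : ℂ, (∃ m : ℤ, lam = 2 * Real.pi * Complex.I * c0 * m) →
    ∃ F F' : ℝ → VecC d, IsH1C F F' ∧ ¬ (∀ᵐ ξ ∂(volume : Measure ℝ), F ξ = 0) ∧
      ∀ᵐ ξ ∂(volume : Measure ℝ), L0opC τ c0 α G U0 r lam F F' ξ = 0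
  kerL0 : ∀ F F' : ℝ → Vec d, IsH1 F F' →
    ((∀ᵐ ξ ∂(volume : Measure ℝ), L0op τ c0 α G U0 r F F' ξ = 0) ↔
      ∃ c : ℝ, ∀ᵐ ξ ∂(volume : Measure ℝ), F ξ = c • Φp ξ)
  kerL0star : ∀ F F' : ℝ → Vec d, IsH1 F F' →
    ((∀ᵐ ξ ∂(volume : Measure ℝ), L0starop τ c0 α G U0 r F F' ξ = 0) ↔
      ∃ c : ℝ, ∀ᵐ ξ ∂(volume : Measure ℝ), F ξ = c • Φm ξ)
  kerL0_perp : ∀ g : ℝ → Vec d, MemLp g 2 volume →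
    ((∀ F F' : ℝ → Vec d, IsH1 F F' → innerL2 g (L0starop τ c0 α G U0 r F F') = 0) ↔
      ∃ c : ℝ, ∀ᵐ ξ ∂(volume : Measure ℝ), g ξ = c • Φp ξ)
  kerL0star_perp : ∀ g : ℝ → Vec d, MemLp g 2 volume →
    ((∀ F F' : ℝ → Vec d, IsH1 F F' → innerL2 g (L0op τ c0 α G U0 r F F') = 0) ↔
      ∃ c : ℝ, ∀ᵐ ξ ∂(volume : Measure ℝ), g ξ = c • Φm ξ)

/-! ### Exponentially weighted spaces `BC_{-η}` -/

/-- Membership in `BC_{-η}(ℝ;ℝ^d)`: continuous with `sup_ξ e^{η|ξ|}‖F(ξ)‖ < ∞`. -/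
def MemBC {d : ℕ} (η : ℝ) (F : ℝ → Vec d) : Prop :=
  Continuous F ∧ BddAbove (Set.range fun ξ : ℝ => Real.exp (η * |ξ|) * ‖F ξ‖)

/-- The `BC_{-η}` norm `sup_ξ e^{η|ξ|}‖F(ξ)‖`. -/
def BCnorm {d : ℕ} (η : ℝ) (F : ℝ → Vec d) : ℝ := ⨆ ξ : ℝ, Real.exp (η * |ξ|) * ‖F ξ‖

/-- Membership in `BC¹_{-η}(ℝ;ℝ^d)` of `F` with derivative `F'`. -/
def MemBC1 {d : ℕ} (η : ℝ) (F F' : ℝ → Vec d) : Prop :=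
  (∀ ξ : ℝ, HasDerivAt F (F' ξ) ξ) ∧ Continuous F' ∧
  BddAbove (Set.range fun ξ : ℝ => Real.exp (η * |ξ|) * (‖F ξ‖ + ‖F' ξ‖))

/-- The `BC¹_{-η}` norm `sup_ξ e^{η|ξ|}(‖F(ξ)‖ + ‖F'(ξ)‖)`. -/
def BC1norm {d : ℕ} (η : ℝ) (F F' : ℝ → Vec d) : ℝ :=
  ⨆ ξ : ℝ, Real.exp (η * |ξ|) * (‖F ξ‖ + ‖F' ξ‖)

/-! ### BDF coefficients -/

/-- Backward difference `(∂v)(n) = v(n) − v(n−1)`. -/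
def bdiff (v : ℤ → ℝ) : ℤ → ℝ := fun n => v n - v (n - 1)

/-- `(μ, β)` are the order-`k` BDF coefficients: for every scalar sequence `v`,
`Σ_{n=0}^k μ_n v(n−k) = Σ_{n'=1}^k (∂^{n'} v)(0)`, and `β = Σ_{n=1}^k n μ_n`. -/
def BDFcoeff (k : ℕ) (μ : ℕ → ℝ) (β : ℝ) : Prop :=
  (∀ v : ℤ → ℝ, ∑ n ∈ Finset.range (k + 1), μ n * v ((n : ℤ) - (k : ℤ))
      = ∑ n' ∈ Finset.Icc 1 k, (bdiff^[n'] v) 0) ∧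
  β = ∑ n ∈ Finset.Icc 1 k, (n : ℝ) * μ n

/-! ### The grid space `𝒴_M` (functions on `p⁻¹ℤ`, indexed by `ℤ`) -/

/-- Inner product on `𝒴_M = ℓ²_p(ℝ^d)`: `⟨V,W⟩ = p⁻¹ Σ_{j∈ℤ} ⟨V_j, W_j⟩`. -/
def innerY {d : ℕ} (p : ℕ) (V W : ℤ → Vec d) : ℝ := ((p : ℝ))⁻¹ * ∑' j : ℤ, dotV (V j) (W j)

/-- Membership in `𝒴_M = ℓ²_p(ℝ^d)`. -/
def MemY {d : ℕ} (V : ℤ → Vec d) : Prop := Summable fun j : ℤ => dotV (V j) (V j)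

/-- Norm on `𝒴_M`. -/
def normY {d : ℕ} (p : ℕ) (V : ℤ → Vec d) : ℝ := Real.sqrt (innerY p V V)

/-- Norm on `𝒴¹_{k,M}` (with `DV` the discrete derivative of `V`). -/
def normY1 {d : ℕ} (p : ℕ) (V DV : ℤ → Vec d) : ℝ :=
  Real.sqrt (innerY p V V + innerY p DV DV)

/-- The discrete BDF derivative `D_{k,M}` on the grid `p⁻¹ℤ` (a shift by `M⁻¹` is `q` grid
steps, with `M = p/q`). -/
def DkY {d : ℕ} (k : ℕ) (μ : ℕ → ℝ) (β M : ℝ) (q : ℕ) (V : ℤ → Vec d) : ℤ → Vec d :=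
  fun j => β⁻¹ • M • ∑ n' ∈ Finset.range (k + 1), μ n' • V (j - ((k : ℤ) - (n' : ℤ)) * q)

/-- The operator `Δ₀` on the grid `p⁻¹ℤ` (a shift by `m ∈ ℤ_{>0}` is `m·p` grid steps). -/
def Δ0Y {d : ℕ} (τ : ℝ) (α : ℕ → Vec d) (p : ℕ) (V : ℤ → Vec d) : ℤ → Vec d :=
  fun j i => τ * ∑' m : ℕ, α (m + 1) i *
    (V (j + ((m : ℤ) + 1) * p) i + V (j - ((m : ℤ) + 1) * p) i - 2 * V j i)

/-- The linearised fully discrete operator `L_{k,M} : 𝒴¹_{k,M} → 𝒴_M`. -/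
def LkMop {d : ℕ} (τ c0 : ℝ) (α : ℕ → Vec d) (G : Vec d → ℝ → Vec d) (U0 : ℝ → Vec d)
    (r : ℝ) (k : ℕ) (μ : ℕ → ℝ) (β : ℝ) (p q : ℕ) (V : ℤ → Vec d) : ℤ → Vec d :=
  fun j => c0 • DkY k μ β ((p : ℝ) / q) q V j - Δ0Y τ α p V j
    - (DUG G (U0 ((j : ℝ) / p)) r).mulVec (V j)

/-- Restriction of a continuum function to the grid `p⁻¹ℤ`. -/
def restrY {d : ℕ} (p : ℕ) (f : ℝ → Vec d) : ℤ → Vec d := fun j => f ((j : ℝ) / p)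

/-! ### The spaces `ℓ²_{q,⊥}`, `ℋ_M` and the associated operators -/

/-- The `ℓ²_{q,⊥}` inner product on maps `q⁻¹{0,…,q} → ℝ^d` (indexed by `Fin (q+1)`). -/
def innerPerp {d : ℕ} (q : ℕ) (Φ Ψ : Fin (q + 1) → Vec d) : ℝ :=
  (q : ℝ)⁻¹ * ((1 / 2) * dotV (Φ 0) (Ψ 0) + (1 / 2) * dotV (Φ (Fin.last q)) (Ψ (Fin.last q))
    + ∑ ζ ∈ Finset.Ioo (0 : Fin (q + 1)) (Fin.last q), dotV (Φ ζ) (Ψ ζ))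

/-- Index reduction `ℤ → Fin (q+1)` by the representative in `{0,…,q−1}`. -/
def zmodIdx (q : ℕ) (hq : 0 < q) (j : ℤ) : Fin (q + 1) :=
  ⟨(j % (q : ℤ)).toNat, by
    have h2 : j % (q : ℤ) < (q : ℤ) := Int.emod_lt_of_pos j (by exact_mod_cast hq)
    have h1 : 0 ≤ j % (q : ℤ) := Int.emod_nonneg j (by exact_mod_cast hq.ne')
    omega⟩

/-- Extension of an element of `ℋ_M` to all `ζ ∈ q⁻¹ℤ` via the convention
`Φ(ζ±1, ξ) = Φ(ζ, ξ±M⁻¹)`; here `j` is the `ζ`-index in units of `q⁻¹` and `l` the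
`ξ`-index in units of `M⁻¹`. -/
def extH {d : ℕ} (q : ℕ) (hq : 0 < q) (Φ : Fin (q + 1) → ℤ → Vec d) : ℤ → ℤ → Vec d :=
  fun j l => Φ (zmodIdx q hq j) (l + j / (q : ℤ))

/-- The compatibility constraint for `ℋ_M`: `Φ(1,ξ) = Φ(0, ξ + M⁻¹)`. -/
def HConstraint {d : ℕ} (q : ℕ) (Φ : Fin (q + 1) → ℤ → Vec d) : Prop :=
  ∀ l : ℤ, Φ (Fin.last q) l = Φ 0 (l + 1)

/-- Inner product on `ℋ_M`. -/
def innerH {d : ℕ} (q : ℕ) (M : ℝ) (Φ Ψ : Fin (q + 1) → ℤ → Vec d) : ℝ :=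
  M⁻¹ * ∑' l : ℤ, innerPerp q (fun ζ => Φ ζ l) (fun ζ => Ψ ζ l)

/-- Membership in `ℋ_M`. -/
def MemH {d : ℕ} (q : ℕ) (Φ : Fin (q + 1) → ℤ → Vec d) : Prop :=
  Summable fun l : ℤ => innerPerp q (fun ζ => Φ ζ l) (fun ζ => Φ ζ l)

/-- Norm on `ℋ_M`. -/
def normH {d : ℕ} (q : ℕ) (M : ℝ) (Φ : Fin (q + 1) → ℤ → Vec d) : ℝ :=
  Real.sqrt (innerH q M Φ Φ)

/-- The BDF discrete derivative on `ℋ_M`, acting in the second variable. -/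
def DkH {d : ℕ} (q k : ℕ) (μ : ℕ → ℝ) (β M : ℝ) (Φ : Fin (q + 1) → ℤ → Vec d) :
    Fin (q + 1) → ℤ → Vec d :=
  fun ζ l => β⁻¹ • M • ∑ n' ∈ Finset.range (k + 1), μ n' • Φ ζ (l - ((k : ℤ) - (n' : ℤ)))

/-- The adjoint BDF discrete derivative on `ℋ_M`. -/
def DkHstar {d : ℕ} (q k : ℕ) (μ : ℕ → ℝ) (β M : ℝ) (Φ : Fin (q + 1) → ℤ → Vec d) :
    Fin (q + 1) → ℤ → Vec d :=
  fun ζ l => β⁻¹ • M • ∑ n' ∈ Finset.range (k + 1), μ n' • Φ ζ (l + ((k : ℤ) - (n' : ℤ)))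

/-- Norm on `ℋ¹_{k,M}`. -/
def normH1 {d : ℕ} (q k : ℕ) (μ : ℕ → ℝ) (β M : ℝ) (Φ : Fin (q + 1) → ℤ → Vec d) : ℝ :=
  Real.sqrt (innerH q M Φ Φ + innerH q M (DkH q k μ β M Φ) (DkH q k μ β M Φ))

/-- The operator `Δ_M` on `ℋ_M`, with twist data `t = θq ∈ {1,…,q}` and `n` satisfying
`p = nq + t`, i.e. `1 = (n+θ)M⁻¹`. -/
def ΔMop {d : ℕ} (q : ℕ) (hq : 0 < q) (τ : ℝ) (α : ℕ → Vec d) (t n : ℤ)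
    (Φ : Fin (q + 1) → ℤ → Vec d) : Fin (q + 1) → ℤ → Vec d :=
  fun ζ l i => τ * ∑' m : ℕ, α (m + 1) i *
    (extH q hq Φ (((ζ : ℕ) : ℤ) + ((m : ℤ) + 1) * t) (l + ((m : ℤ) + 1) * n) i
      + extH q hq Φ (((ζ : ℕ) : ℤ) - ((m : ℤ) + 1) * t) (l - ((m : ℤ) + 1) * n) i
      - 2 * Φ ζ l i)

/-- The fully discrete linearised operator `𝒦_{k,M} : ℋ¹_{k,M} → ℋ_M`. -/
def KkM {d : ℕ} (q : ℕ) (hq : 0 < q) (τ c0 : ℝ) (α : ℕ → Vec d) (G : Vec d → ℝ → Vec d)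
    (U0 : ℝ → Vec d) (r : ℝ) (k : ℕ) (μ : ℕ → ℝ) (β : ℝ) (p : ℕ) (t n : ℤ)
    (Φ : Fin (q + 1) → ℤ → Vec d) : Fin (q + 1) → ℤ → Vec d :=
  fun ζ l => c0 • DkH q k μ β ((p : ℝ) / q) Φ ζ l - ΔMop q hq τ α t n Φ ζ l
    - (DUG G (U0 (((l * (q : ℤ) + ((ζ : ℕ) : ℤ) : ℤ) : ℝ) / p)) r).mulVec (Φ ζ l)

/-- The adjoint fully discrete operator `𝒦*_{k,M}`. -/
def KkMstar {d : ℕ} (q : ℕ) (hq : 0 < q) (τ c0 : ℝ) (α : ℕ → Vec d) (G : Vec d → ℝ → Vec d)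
    (U0 : ℝ → Vec d) (r : ℝ) (k : ℕ) (μ : ℕ → ℝ) (β : ℝ) (p : ℕ) (t n : ℤ)
    (Φ : Fin (q + 1) → ℤ → Vec d) : Fin (q + 1) → ℤ → Vec d :=
  fun ζ l => c0 • DkHstar q k μ β ((p : ℝ) / q) Φ ζ l - ΔMop q hq τ α t n Φ ζ l
    - (DUG G (U0 (((l * (q : ℤ) + ((ζ : ℕ) : ℤ) : ℤ) : ℝ) / p)) r).transpose.mulVec (Φ ζ l)

/-- Sampling of a continuum function into `ℋ_M`: `[π_{ℋ_M}f](ζ,ξ) = f(ξ + ζM⁻¹)`. -/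
def piH {d : ℕ} (q p : ℕ) (f : ℝ → Vec d) : Fin (q + 1) → ℤ → Vec d :=
  fun ζ l => f (((l * (q : ℤ) + ((ζ : ℕ) : ℤ) : ℤ) : ℝ) / p)

/-- The twist datum `t = θ(M)·q ∈ {1,…,q}` associated with `M = p/q`. -/
def tOf (q p : ℕ) : ℤ := if p % q = 0 then (q : ℤ) else ((p % q : ℕ) : ℤ)

/-- The integer `n(M)` with `1 = (n + θ)M⁻¹`, i.e. `p = n q + t`. -/
def nOf (q p : ℕ) : ℤ := ((p : ℤ) - tOf q p) / (q : ℤ)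

/-! ### The limiting operators on `H¹(ℝ, ℓ²_{q,⊥;∞})` -/

/-- Periodic extension in `ζ` of a function `Θ(ζ,ξ)` using the convention
`Θ(ζ+1,ξ) = Θ(ζ,ξ)`. -/
def extPer {d : ℕ} (q : ℕ) (hq : 0 < q) (Θ : Fin (q + 1) → ℝ → Vec d) : ℤ → ℝ → Vec d :=
  fun j ξ => Θ (zmodIdx q hq j) ξ

/-- Complex version of `extPer`. -/
def extPerC {d : ℕ} (q : ℕ) (hq : 0 < q) (Θ : Fin (q + 1) → ℝ → VecC d) : ℤ → ℝ → VecC d :=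
  fun j ξ => Θ (zmodIdx q hq j) ξ

/-- The operator `Δ_{q,θ}` with twist datum `t = θ q`. -/
def ΔQθ {d : ℕ} (q : ℕ) (hq : 0 < q) (τ : ℝ) (α : ℕ → Vec d) (t : ℤ)
    (Θ : Fin (q + 1) → ℝ → Vec d) : Fin (q + 1) → ℝ → Vec d :=
  fun ζ ξ i => τ * ∑' m : ℕ, α (m + 1) i *
    (extPer q hq Θ (((ζ : ℕ) : ℤ) + ((m : ℤ) + 1) * t) (ξ + ((m : ℝ) + 1)) i
      + extPer q hq Θ (((ζ : ℕ) : ℤ) - ((m : ℤ) + 1) * t) (ξ - ((m : ℝ) + 1)) i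
      - 2 * Θ ζ ξ i)

/-- Complex version of `Δ_{q,θ}`. -/
def ΔQθC {d : ℕ} (q : ℕ) (hq : 0 < q) (τ : ℝ) (α : ℕ → Vec d) (t : ℤ)
    (Θ : Fin (q + 1) → ℝ → VecC d) : Fin (q + 1) → ℝ → VecC d :=
  fun ζ ξ i => (τ : ℂ) * ∑' m : ℕ, ((α (m + 1) i : ℝ) : ℂ) *
    (extPerC q hq Θ (((ζ : ℕ) : ℤ) + ((m : ℤ) + 1) * t) (ξ + ((m : ℝ) + 1)) i
      + extPerC q hq Θ (((ζ : ℕ) : ℤ) - ((m : ℤ) + 1) * t) (ξ - ((m : ℝ) + 1)) i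
      - 2 * Θ ζ ξ i)

/-- The limiting operator `𝒦̄_{q,θ} Θ = c̄₀ ∂_ξ Θ − Δ_{q,θ} Θ − D_U G(Ū₀(ξ); r̄) Θ`,
evaluated on a pair `(Θ, Θ')`. -/
def Kbar {d : ℕ} (q : ℕ) (hq : 0 < q) (τ c0 : ℝ) (α : ℕ → Vec d) (G : Vec d → ℝ → Vec d)
    (U0 : ℝ → Vec d) (r : ℝ) (t : ℤ) (Θ Θ' : Fin (q + 1) → ℝ → Vec d) :
    Fin (q + 1) → ℝ → Vec d :=
  fun ζ ξ => c0 • Θ' ζ ξ - ΔQθ q hq τ α t Θ ζ ξ - (DUG G (U0 ξ) r).mulVec (Θ ζ ξ)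

/-- The formal adjoint `𝒦̄*_{q,θ}`. -/
def KbarStar {d : ℕ} (q : ℕ) (hq : 0 < q) (τ c0 : ℝ) (α : ℕ → Vec d)
    (G : Vec d → ℝ → Vec d) (U0 : ℝ → Vec d) (r : ℝ) (t : ℤ)
    (Θ Θ' : Fin (q + 1) → ℝ → Vec d) : Fin (q + 1) → ℝ → Vec d :=
  fun ζ ξ => (-c0) • Θ' ζ ξ - ΔQθ q hq τ α t Θ ζ ξ
    - (DUG G (U0 ξ) r).transpose.mulVec (Θ ζ ξ)

/-- Complexification of `𝒦̄_{q,θ} + λ`. -/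
def KbarC {d : ℕ} (q : ℕ) (hq : 0 < q) (τ c0 : ℝ) (α : ℕ → Vec d) (G : Vec d → ℝ → Vec d)
    (U0 : ℝ → Vec d) (r : ℝ) (t : ℤ) (lam : ℂ) (Θ Θ' : Fin (q + 1) → ℝ → VecC d) :
    Fin (q + 1) → ℝ → VecC d :=
  fun ζ ξ i => (c0 : ℂ) * Θ' ζ ξ i - ΔQθC q hq τ α t Θ ζ ξ i
    - ∑ j, ((DUG G (U0 ξ) r i j : ℝ) : ℂ) * Θ ζ ξ j + lam * Θ ζ ξ i

/-- Membership of a pair `(Θ, Θ')` in `H¹(ℝ, ℓ²_{q,⊥;∞})`. -/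
def IsH1perp {d : ℕ} (q : ℕ) (Θ Θ' : Fin (q + 1) → ℝ → Vec d) : Prop :=
  (∀ ζ, IsH1 (Θ ζ) (Θ' ζ)) ∧ (∀ ξ : ℝ, Θ (Fin.last q) ξ = Θ 0 ξ) ∧
    (∀ ξ : ℝ, Θ' (Fin.last q) ξ = Θ' 0 ξ)

/-- Complex version of `IsH1perp`. -/
def IsH1perpC {d : ℕ} (q : ℕ) (Θ Θ' : Fin (q + 1) → ℝ → VecC d) : Prop :=
  (∀ ζ, IsH1C (Θ ζ) (Θ' ζ)) ∧ (∀ ξ : ℝ, Θ (Fin.last q) ξ = Θ 0 ξ) ∧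
    (∀ ξ : ℝ, Θ' (Fin.last q) ξ = Θ' 0 ξ)

/-- Membership of `Θ` in `L²(ℝ, ℓ²_{q,⊥;∞})`. -/
def MemL2perp {d : ℕ} (q : ℕ) (Θ : Fin (q + 1) → ℝ → Vec d) : Prop :=
  (∀ ζ, MemLp (Θ ζ) 2 (volume : Measure ℝ)) ∧ (∀ ξ : ℝ, Θ (Fin.last q) ξ = Θ 0 ξ)

/-- The `L²(ℝ, ℓ²_{q,⊥})` pairing. -/
def innerL2perp {d : ℕ} (q : ℕ) (Θ Ψ : Fin (q + 1) → ℝ → Vec d) : ℝ :=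
  ∫ ξ : ℝ, innerPerp q (fun ζ => Θ ζ ξ) (fun ζ => Ψ ζ ξ)

/-- The `H¹(ℝ, ℓ²_{q,⊥})` norm of a pair `(Θ, Θ')`. -/
def normH1perp {d : ℕ} (q : ℕ) (Θ Θ' : Fin (q + 1) → ℝ → Vec d) : ℝ :=
  Real.sqrt (innerL2perp q Θ Θ + innerL2perp q Θ' Θ')

/-- The `L²(ℝ, ℓ²_{q,⊥})` norm. -/
def normL2perp {d : ℕ} (q : ℕ) (Θ : Fin (q + 1) → ℝ → Vec d) : ℝ :=
  Real.sqrt (innerL2perp q Θ Θ)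

/-- The embedding `[π_⊥ f](ζ, ξ) = f(ξ)`. -/
def piPerp {d : ℕ} (q : ℕ) (f : ℝ → Vec d) : Fin (q + 1) → ℝ → Vec d := fun _ ξ => f ξ

/-! ### Characteristic matrices and operators -/

/-- `A(y)`: diagonal entries `A_i(y) = Σ_{m>0} α_m^{(i,i)}(1 − cos(my))`. -/
def Afun {d : ℕ} (α : ℕ → Vec d) (y : ℝ) : Fin d → ℝ :=
  fun i => ∑' m : ℕ, α (m + 1) i * (1 - Real.cos (((m : ℝ) + 1) * y))

/-- The averaged Jacobian `DG_ρ = ρ D_U G(P⁻; r̄) + (1−ρ) D_U G(P⁺; r̄)`. -/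
def DGrho {d : ℕ} (G : Vec d → ℝ → Vec d) (Pm Pp : Vec d) (r ρ : ℝ) :
    Matrix (Fin d) (Fin d) ℝ :=
  ρ • DUG G Pm r + (1 - ρ) • DUG G Pp r

/-- The characteristic matrix `Δ_{ρ;λ}(iy) = c̄₀ i y I + 2τ A(y) − DG_ρ + λ I`. -/
def charMat {d : ℕ} (τ c0 : ℝ) (α : ℕ → Vec d) (G : Vec d → ℝ → Vec d) (Pm Pp : Vec d)
    (r ρ y : ℝ) (lam : ℂ) : Matrix (Fin d) (Fin d) ℂ :=
  fun i j => (if i = j then (c0 : ℂ) * (y : ℂ) * Complex.I + lam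
      + 2 * (τ : ℂ) * ((Afun α y i : ℝ) : ℂ) else 0)
    - ((DGrho G Pm Pp r ρ i j : ℝ) : ℂ)

/-- Periodic extension of an element of (the complexification of) `ℓ²_{q,⊥;∞}`. -/
def extFinC {d : ℕ} (q : ℕ) (hq : 0 < q) (V : Fin (q + 1) → VecC d) : ℤ → VecC d :=
  fun j => V (zmodIdx q hq j)

/-- The characteristic operator `Δ_{q,θ,ρ;λ}(iy)` on the complexification of `ℓ²_{q,⊥;∞}`,
with twist datum `t = θq`. -/
def charOp {d : ℕ} (q : ℕ) (hq : 0 < q) (τ c0 : ℝ) (α : ℕ → Vec d)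
    (G : Vec d → ℝ → Vec d) (Pm Pp : Vec d) (r ρ : ℝ) (t : ℤ) (y : ℝ) (lam : ℂ)
    (V : Fin (q + 1) → VecC d) : Fin (q + 1) → VecC d :=
  fun ζ i => ((c0 : ℂ) * (y : ℂ) * Complex.I + lam) * V ζ i
    - (τ : ℂ) * ∑' m : ℕ, ((α (m + 1) i : ℝ) : ℂ) *
        (Complex.exp (Complex.I * ((m : ℝ) + 1) * y) *
            extFinC q hq V (((ζ : ℕ) : ℤ) + ((m : ℤ) + 1) * t) i
          + Complex.exp (-(Complex.I * ((m : ℝ) + 1) * y)) *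
            extFinC q hq V (((ζ : ℕ) : ℤ) - ((m : ℤ) + 1) * t) i
          - 2 * V ζ i)
    - ∑ j, ((DGrho G Pm Pp r ρ i j : ℝ) : ℂ) * V ζ j

/-! ### Interpolation operators -/

/-- The order-zero interpolation `ℐ⁰_M`. -/
def I0interp {d : ℕ} (q : ℕ) (M : ℝ) (Φ : Fin (q + 1) → ℤ → Vec d) :
    Fin (q + 1) → ℝ → Vec d :=
  fun ζ ξ => Φ ζ ⌊M * ξ⌋

/-- The order-one (piecewise linear) interpolation `ℐ¹_{k,M}`. -/
def I1interp {d : ℕ} (q : ℕ) (M : ℝ) (Φ : Fin (q + 1) → ℤ → Vec d) :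
    Fin (q + 1) → ℝ → Vec d :=
  fun ζ ξ => M • ((ξ - (⌊M * ξ⌋ : ℝ) / M) • Φ ζ (⌊M * ξ⌋ + 1)
    + (((⌊M * ξ⌋ : ℝ) + 1) / M - ξ) • Φ ζ ⌊M * ξ⌋)

/-- The a.e. derivative of the piecewise linear interpolation. -/
def I1deriv {d : ℕ} (q : ℕ) (M : ℝ) (Φ : Fin (q + 1) → ℤ → Vec d) :
    Fin (q + 1) → ℝ → Vec d :=
  fun ζ ξ => M • (Φ ζ (⌊M * ξ⌋ + 1) - Φ ζ ⌊M * ξ⌋)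

/-! ### `Δ_M` acting on continuum functions (for the convergence lemma) -/

/-- Extension of a continuum function `Θ(ζ,ξ)` via the convention
`Θ(ζ±1,ξ) = Θ(ζ, ξ±M⁻¹)`, where `Minv = M⁻¹`. -/
def extContM {d : ℕ} (q : ℕ) (hq : 0 < q) (Minv : ℝ) (Θ : Fin (q + 1) → ℝ → Vec d) :
    ℤ → ℝ → Vec d :=
  fun j ξ => Θ (zmodIdx q hq j) (ξ + ((j / (q : ℤ) : ℤ) : ℝ) * Minv)

/-- The operator `Δ_M` acting on continuum functions of `(ζ, ξ)`, with twist data `(t, n)`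
and `Minv = M⁻¹`. -/
def ΔMcont {d : ℕ} (q : ℕ) (hq : 0 < q) (τ : ℝ) (α : ℕ → Vec d) (t n : ℤ) (Minv : ℝ)
    (Θ : Fin (q + 1) → ℝ → Vec d) : Fin (q + 1) → ℝ → Vec d :=
  fun ζ ξ i => τ * ∑' m : ℕ, α (m + 1) i *
    (extContM q hq Minv Θ (((ζ : ℕ) : ℤ) + ((m : ℤ) + 1) * t)
        (ξ + ((m : ℝ) + 1) * (n : ℝ) * Minv) i
      + extContM q hq Minv Θ (((ζ : ℕ) : ℤ) - ((m : ℤ) + 1) * t)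
        (ξ - ((m : ℝ) + 1) * (n : ℝ) * Minv) i
      - 2 * Θ ζ ξ i)

/-! ### The quantities `ℰ_{k,M}(δ)`, `κ(δ)` and the resolvent bound -/

/-- The quantity `ℰ_{k,M}(δ)` from the spectral convergence method. -/
def EkM {d : ℕ} (q : ℕ) (hq : 0 < q) (τ c0 : ℝ) (α : ℕ → Vec d) (G : Vec d → ℝ → Vec d)
    (U0 : ℝ → Vec d) (r : ℝ) (k : ℕ) (μ : ℕ → ℝ) (β : ℝ) (Φm : ℝ → Vec d)
    (p : ℕ) (δ : ℝ) : ℝ :=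
  sInf { x : ℝ | ∃ Φ : Fin (q + 1) → ℤ → Vec d, HConstraint q Φ ∧ MemH q Φ ∧
    normH1 q k μ β ((p : ℝ) / q) Φ = 1 ∧
    x = normH q ((p : ℝ) / q)
          (fun ζ l => KkM q hq τ c0 α G U0 r k μ β p (tOf q p) (nOf q p) Φ ζ l + δ • Φ ζ l)
      + δ⁻¹ * |innerH q ((p : ℝ) / q) (piH q p Φm)
          (fun ζ l => KkM q hq τ c0 α G U0 r k μ β p (tOf q p) (nOf q p) Φ ζ l + δ • Φ ζ l)| }

/-- The quantity `ℰ*_{k,M}(δ)`, defined analogously with `𝒦*_{k,M}` and `Φ₀⁺`. -/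
def EkMstar {d : ℕ} (q : ℕ) (hq : 0 < q) (τ c0 : ℝ) (α : ℕ → Vec d) (G : Vec d → ℝ → Vec d)
    (U0 : ℝ → Vec d) (r : ℝ) (k : ℕ) (μ : ℕ → ℝ) (β : ℝ) (Φp : ℝ → Vec d)
    (p : ℕ) (δ : ℝ) : ℝ :=
  sInf { x : ℝ | ∃ Φ : Fin (q + 1) → ℤ → Vec d, HConstraint q Φ ∧ MemH q Φ ∧
    normH1 q k μ β ((p : ℝ) / q) Φ = 1 ∧
    x = normH q ((p : ℝ) / q)
          (fun ζ l => KkMstar q hq τ c0 α G U0 r k μ β p (tOf q p) (nOf q p) Φ ζ l + δ • Φ ζ l)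
      + δ⁻¹ * |innerH q ((p : ℝ) / q) (piH q p Φp)
          (fun ζ l => KkMstar q hq τ c0 α G U0 r k μ β p (tOf q p) (nOf q p) Φ ζ l + δ • Φ ζ l)| }

/-- `κ(δ) = liminf_{M → ∞, M ∈ ℳ_q} ℰ_{k,M}(δ)`. -/
def kappaE {d : ℕ} (q : ℕ) (hq : 0 < q) (τ c0 : ℝ) (α : ℕ → Vec d) (G : Vec d → ℝ → Vec d)
    (U0 : ℝ → Vec d) (r : ℝ) (k : ℕ) (μ : ℕ → ℝ) (β : ℝ) (Φm : ℝ → Vec d) (δ : ℝ) : ℝ :=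
  Filter.liminf (fun p : ℕ => EkM q hq τ c0 α G U0 r k μ β Φm p δ)
    (Filter.atTop ⊓ Filter.principal {p : ℕ | Nat.Coprime p q ∧ q ≤ p})

/-- `κ*(δ) = liminf_{M → ∞, M ∈ ℳ_q} ℰ*_{k,M}(δ)`. -/
def kappaEstar {d : ℕ} (q : ℕ) (hq : 0 < q) (τ c0 : ℝ) (α : ℕ → Vec d)
    (G : Vec d → ℝ → Vec d) (U0 : ℝ → Vec d) (r : ℝ) (k : ℕ) (μ : ℕ → ℝ) (β : ℝ)
    (Φp : ℝ → Vec d) (δ : ℝ) : ℝ :=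
  Filter.liminf (fun p : ℕ => EkMstar q hq τ c0 α G U0 r k μ β Φp p δ)
    (Filter.atTop ⊓ Filter.principal {p : ℕ | Nat.Coprime p q ∧ q ≤ p})

/-- The resolvent bound for the limiting operator `𝒦̄_{q,θ}` (with twist datum `t = θq`):
for `0 < δ < δ0`, `𝒦̄_{q,θ} + δ` is surjective onto `L²(ℝ,ℓ²_{q,⊥;∞})` and every solution
obeys the `H¹` estimate with constant `C`. -/
def ResolventBound {d : ℕ} (q : ℕ) (hq : 0 < q) (τ c0 : ℝ) (α : ℕ → Vec d)
    (G : Vec d → ℝ → Vec d) (U0 : ℝ → Vec d) (r : ℝ) (t : ℤ) (Φm : ℝ → Vec d)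
    (C δ0 : ℝ) : Prop :=
  ∀ δ : ℝ, 0 < δ → δ < δ0 →
    (∀ Θ : Fin (q + 1) → ℝ → Vec d, MemL2perp q Θ →
      ∃ Φ Φ' : Fin (q + 1) → ℝ → Vec d, IsH1perp q Φ Φ' ∧
        ∀ᵐ ξ ∂(volume : Measure ℝ), ∀ ζ,
          Kbar q hq τ c0 α G U0 r t Φ Φ' ζ ξ + δ • Φ ζ ξ = Θ ζ ξ) ∧
    (∀ Θ Φ Φ' : Fin (q + 1) → ℝ → Vec d, MemL2perp q Θ → IsH1perp q Φ Φ' →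
      (∀ᵐ ξ ∂(volume : Measure ℝ), ∀ ζ,
          Kbar q hq τ c0 α G U0 r t Φ Φ' ζ ξ + δ • Φ ζ ξ = Θ ζ ξ) →
      normH1perp q Φ Φ' ≤ C * (normL2perp q Θ + δ⁻¹ * |innerL2perp q Θ (piPerp q Φm)|))

/-- The second derivative `D²G(U;r)[a,b]` of the nonlinearity. -/
def D2G {d : ℕ} (G : Vec d → ℝ → Vec d) (U : Vec d) (r : ℝ) (a b : Vec d) : Vec d :=
  fun i => fderiv ℝ (fun V => fderiv ℝ (fun W => G W r i) V a) U b

/-- The quasi-inverse `L₀^{qinv} G = L₀⁻¹[G − (⟨Φ₀⁻,G⟩/⟨Φ₀⁻,Φ₀⁺⟩) Φ₀⁺]`, built from a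
given inverse `Linv` of the restriction `L₀ : X₀ → Y₀`. -/
def qinvOf {d : ℕ} (Linv : (ℝ → Vec d) → (ℝ → Vec d)) (Φp Φm : ℝ → Vec d)
    (Gf : ℝ → Vec d) : ℝ → Vec d :=
  Linv (fun ξ => Gf ξ - (innerL2 Φm Gf / innerL2 Φm Φp) • Φp ξ)

/-!
Identify a `ζ`-periodic `V` with a function on `ℤ/qℤ`. The `ζ`-shifts in `Δ_{q,θ,ρ;λ}(iy)` are then
translations, which the discrete Fourier transform diagonalises: the `k`-th Fourier coefficient
`v` of `V` solves `(c̄₀iy + λ + 2τA(z_k)) v = DG_ρ v` for a frequency `z_k`, and `A ≥ 0` by (HS1).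
Under (HS3) there is a positive diagonal weight `W` for which `-W DG_ρ` is coercive uniformly in
`ρ ∈ [0,1]`: `W = I` in case (a), and `W = diag(I, ΓI)` in case (b), which makes the off-diagonal
blocks cancel. Pairing the mode equation with `W v̄` and taking real parts gives
`(Re λ + c) |v|²_W ≤ 0`, so `v = 0` once `Re λ > -c`, and Fourier inversion gives `V = 0`.
-/

section DiscreteFourier

open Complex ZMod

variable {N : ℕ} [NeZero N]

def twistedSecondDiff (a : ℕ → ℝ) (y : ℝ) (s : ZMod N) (f : ZMod N → ℂ) (j : ZMod N) : ℂ :=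
  ∑' m : ℕ, ((a m : ℝ) : ℂ) *
    (exp (I * ((m : ℝ) + 1) * y) * f (j + ((m : ZMod N) + 1) * s)
      + exp (-(I * ((m : ℝ) + 1) * y)) * f (j - ((m : ZMod N) + 1) * s) - 2 * f j)

lemma summable_twistedSecondDiff_term {a : ℕ → ℝ} (ha : Summable fun m ↦ |a m|) (y : ℝ)
    (s : ZMod N) (f : ZMod N → ℂ) (j : ZMod N) :
    Summable fun m : ℕ ↦ ((a m : ℝ) : ℂ) *
      (exp (I * ((m : ℝ) + 1) * y) * f (j + ((m : ZMod N) + 1) * s)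
        + exp (-(I * ((m : ℝ) + 1) * y)) * f (j - ((m : ZMod N) + 1) * s) - 2 * f j) := by
  refine Summable.of_norm_bounded (ha.mul_right (4 * ‖f‖)) fun m ↦ ?_
  have hexp : ∀ w : ℂ, w.re = 0 → ‖exp w‖ = 1 := fun w hw ↦ by
    rw [Complex.norm_exp, hw, Real.exp_zero]
  rw [norm_mul, Complex.norm_real, Real.norm_eq_abs]
  gcongr
  calc _ ≤ _ + _ := norm_sub_le _ _
    _ ≤ _ + _ + _ := add_le_add_left (norm_add_le _ _) _
    _ ≤ _ := by
      simp only [norm_mul, Complex.norm_ofNat]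
      rw [hexp _ (by simp), hexp _ (by simp), one_mul, one_mul]
      linarith [norm_le_pi_norm f (j + ((m : ZMod N) + 1) * s),
        norm_le_pi_norm f (j - ((m : ZMod N) + 1) * s), norm_le_pi_norm f j]

lemma ZMod.stdAddChar_eq_exp_val (x : ZMod N) :
    stdAddChar x = exp (2 * Real.pi * I * x.val / N) := by
  simpa using stdAddChar_coe (N := N) x.val

lemma ZMod.dft_comp_add_right {E : Type*} [AddCommGroup E] [Module ℂ E] (Φ : ZMod N → E)
    (s k : ZMod N) : 𝓕 (fun j ↦ Φ (j + s)) k = stdAddChar (s * k) • 𝓕 Φ k := by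
  simp only [dft_apply, Finset.smul_sum, smul_smul, ← AddChar.map_add_eq_mul]
  exact Fintype.sum_equiv (Equiv.addRight s) _ _ fun j ↦ by
    simp only [Equiv.coe_addRight]; congr 2; ring

lemma ZMod.dft_tsum_apply (g : ℕ → ZMod N → ℂ) (hg : ∀ j, Summable (g · j)) (k : ZMod N) :
    𝓕 (fun j ↦ ∑' m, g m j) k = ∑' m, 𝓕 (g m) k := by
  simp only [dft_apply, smul_eq_mul, ← tsum_mul_left]
  exact (Summable.tsum_finsetSum fun j _ ↦ (hg j).mul_left _).symm

lemma ZMod.dft_secondDiff (c e₁ e₂ : ℂ) (s : ZMod N) (f : ZMod N → ℂ) (k : ZMod N) :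
    𝓕 (fun j ↦ c * (e₁ * f (j + s) + e₂ * f (j - s) - 2 * f j)) k
      = c * (e₁ * stdAddChar (s * k) + e₂ * stdAddChar (-s * k) - 2) * 𝓕 f k := by
  have hfun : (fun j ↦ c * (e₁ * f (j + s) + e₂ * f (j - s) - 2 * f j))
      = c • (e₁ • (fun j ↦ f (j + s)) + e₂ • (fun j ↦ f (j + -s)) - (2 : ℂ) • f) := by
    ext j; simp [sub_eq_add_neg]
  simp only [hfun, _root_.map_smul, map_sub, map_add, Pi.smul_apply, Pi.add_apply, Pi.sub_apply,
    ZMod.dft_comp_add_right, smul_eq_mul]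
  ring

lemma exp_mul_stdAddChar_succ_mul (m : ℕ) (y : ℝ) (x : ZMod N) :
    exp (I * ((m : ℝ) + 1) * y) * stdAddChar (((m : ZMod N) + 1) * x)
      = exp ((((m : ℝ) + 1) * (y + 2 * Real.pi * x.val / N) : ℝ) * I) := by
  have hsmul : ((m : ZMod N) + 1) * x = (m + 1) • x := by
    rw [nsmul_eq_mul]; push_cast; ring
  rw [hsmul, AddChar.map_nsmul_eq_pow, ZMod.stdAddChar_eq_exp_val, ← Complex.exp_nat_mul,
    ← Complex.exp_add]
  congr 1
  push_cast
  ring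

lemma twistedSecondDiff_symbol (m : ℕ) (y : ℝ) (s k : ZMod N) :
    exp (I * ((m : ℝ) + 1) * y) * stdAddChar (((m : ZMod N) + 1) * s * k)
      + exp (-(I * ((m : ℝ) + 1) * y)) * stdAddChar (-(((m : ZMod N) + 1) * s) * k) - 2
      = ((-(2 * (1 - Real.cos (((m : ℝ) + 1) * (y + 2 * Real.pi * (s * k).val / N))))) : ℝ) := by
  rw [neg_mul, mul_assoc _ s k, AddChar.map_neg_eq_inv, Complex.exp_neg, ← mul_inv,
    exp_mul_stdAddChar_succ_mul, ← Complex.exp_neg, ← neg_mul, ← Complex.two_cos]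
  push_cast
  ring

lemma dft_twistedSecondDiff {a : ℕ → ℝ} (ha : Summable fun m ↦ |a m|) (y : ℝ) (s : ZMod N)
    (f : ZMod N → ℂ) (k : ZMod N) :
    𝓕 (twistedSecondDiff a y s f) k
      = ((-(2 * ∑' m : ℕ, a m *
          (1 - Real.cos (((m : ℝ) + 1) * (y + 2 * Real.pi * (s * k).val / N))))) : ℝ) * 𝓕 f k := by
  unfold twistedSecondDiff
  simp only [ZMod.dft_tsum_apply _ (summable_twistedSecondDiff_term ha y s f),
    ZMod.dft_secondDiff, twistedSecondDiff_symbol, tsum_mul_right, ← Complex.ofReal_mul,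
    ← Complex.ofReal_tsum]
  rw [← tsum_mul_left, ← tsum_neg]
  congr 3 with m
  ring

end DiscreteFourier

section Coercivity

open Matrix

variable {d : ℕ}

lemma dotV_eq_dotProduct (x y : Vec d) : dotV x y = x ⬝ᵥ y := rfl

lemma PosDefQ.exists_coercive {M : Matrix (Fin d) (Fin d) ℝ} (hM : PosDefQ M) :
    ∃ c > 0, ∀ x : Vec d, c * ‖x‖ ^ 2 ≤ dotV x (M *ᵥ x) := by
  have hcont : Continuous fun x : Vec d ↦ dotV x (M *ᵥ x) := by
    simp only [dotV_eq_dotProduct]; fun_prop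
  obtain ⟨c, hc, hsphere⟩ := (isCompact_sphere (0 : Vec d) 1).exists_forall_le'
    hcont.continuousOn fun x hx ↦ hM x (ne_zero_of_mem_unit_sphere ⟨x, hx⟩)
  refine ⟨c, hc, fun x ↦ ?_⟩
  rcases eq_or_ne x 0 with rfl | hx
  · simp [dotV]
  have hnorm : 0 < ‖x‖ := norm_pos_iff.mpr hx
  have hunit := hsphere (‖x‖⁻¹ • x) (by simp [norm_smul, hnorm.ne'])
  simp only [dotV_eq_dotProduct, mulVec_smul, smul_dotProduct, dotProduct_smul, smul_eq_mul]
    at hunit ⊢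
  calc c * ‖x‖ ^ 2 ≤ ‖x‖⁻¹ * (‖x‖⁻¹ * x ⬝ᵥ M *ᵥ x) * ‖x‖ ^ 2 := by gcongr
    _ = x ⬝ᵥ M *ᵥ x := by field_simp

lemma sum_mul_sq_le_sum_mul_norm_sq {w : Vec d} (hw : ∀ i, 0 ≤ w i) (x : Vec d) :
    ∑ i, w i * x i ^ 2 ≤ (∑ i, w i) * ‖x‖ ^ 2 := by
  rw [Finset.sum_mul]
  refine Finset.sum_le_sum fun i _ ↦ mul_le_mul_of_nonneg_left ?_ (hw i)
  simpa [Real.norm_eq_abs, sq_abs] using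
      pow_le_pow_left₀ (norm_nonneg _) (norm_le_pi_norm x i) 2

lemma vecMul_diagonal_eq (w x : Vec d) : x ᵥ* diagonal w = diagonal w *ᵥ x := by
  ext i; simp [vecMul_diagonal, mulVec_diagonal, mul_comm]

lemma posDefQ_diagonal_mul_of_blocks {ddiff : ℕ} {N : Matrix (Fin d) (Fin d) ℝ} {Γ : ℝ}
    (hΓ : 0 < Γ)
    (hskew : ∀ i j : Fin d, (i : ℕ) < ddiff → ddiff ≤ (j : ℕ) → N i j = -Γ * N j i)
    (hfirst : ∀ x : Vec d, x ≠ 0 → SuppFirst d ddiff x → 0 < dotV x (N *ᵥ x))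
    (hlast : ∀ x : Vec d, x ≠ 0 → SuppLast d ddiff x → 0 < dotV x (N *ᵥ x)) :
    PosDefQ (diagonal (fun i : Fin d ↦ if (i : ℕ) < ddiff then 1 else Γ) * N) := by
  intro x hx
  set x₁ : Vec d := fun i ↦ if (i : ℕ) < ddiff then x i else 0
  set x₂ : Vec d := fun i ↦ if (i : ℕ) < ddiff then 0 else x i
  have hx₁ : SuppFirst d ddiff x₁ := fun i hi ↦ if_neg (by omega)
  have hx₂ : SuppLast d ddiff x₂ := fun i hi ↦ if_pos hi
  have hsplit : x = x₁ + x₂ := by ext i; by_cases hi : (i : ℕ) < ddiff <;> simp [x₁, x₂, hi]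
  have hweight :
      diagonal (fun i : Fin d ↦ if (i : ℕ) < ddiff then 1 else Γ) *ᵥ x = x₁ + Γ • x₂ := by
    ext i; by_cases hi : (i : ℕ) < ddiff <;> simp [x₁, x₂, hi, mulVec_diagonal]
  -- the two off-diagonal blocks cancel by the skew relation
  have hcross : x₁ ⬝ᵥ N *ᵥ x₂ = -Γ * (x₂ ⬝ᵥ N *ᵥ x₁) := by
    simp only [dotProduct, mulVec, Finset.mul_sum]
    rw [Finset.sum_comm]
    refine Finset.sum_congr rfl fun j _ ↦ Finset.sum_congr rfl fun i _ ↦ ?_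
    by_cases hi : (i : ℕ) < ddiff
    · by_cases hj : (j : ℕ) < ddiff
      · simp [x₁, x₂, hj]
      · simp [x₁, x₂, hi, hj, hskew i j hi (by omega)]; ring
    · simp [x₁, x₂, hi]
  have hquad : dotV x ((diagonal (fun i : Fin d ↦ if (i : ℕ) < ddiff then 1 else Γ) * N) *ᵥ x)
      = dotV x₁ (N *ᵥ x₁) + Γ * dotV x₂ (N *ᵥ x₂) := by
    rw [dotV_eq_dotProduct, ← mulVec_mulVec, dotProduct_mulVec, vecMul_diagonal_eq, hweight,
      hsplit]
    simp only [mulVec_add, dotProduct_add, add_dotProduct, smul_dotProduct, hcross, smul_eq_mul,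
      dotV_eq_dotProduct]
    ring
  have hq₁ : 0 ≤ dotV x₁ (N *ᵥ x₁) := by
    rcases eq_or_ne x₁ 0 with h | h
    · simp [h, dotV]
    · exact (hfirst x₁ h hx₁).le
  have hq₂ : 0 ≤ dotV x₂ (N *ᵥ x₂) := by
    rcases eq_or_ne x₂ 0 with h | h
    · simp [h, dotV]
    · exact (hlast x₂ h hx₂).le
  rw [hquad]
  rcases eq_or_ne x₁ 0 with h₁ | h₁
  · have h₂ : x₂ ≠ 0 := by rintro h₂; exact hx (by rw [hsplit, h₁, h₂, add_zero])
    nlinarith [hlast x₂ h₂ hx₂]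
  · nlinarith [hfirst x₁ h₁ hx₁]

lemma HS3.exists_weights {ddiff : ℕ} {G : Vec d → ℝ → Vec d} {Pm Pp : Vec d} {r : ℝ}
    (h : HS3 ddiff G Pm Pp r) :
    ∃ w : Vec d, (∀ i, 0 < w i) ∧
      PosDefQ (-(diagonal w * DUG G Pm r)) ∧ PosDefQ (-(diagonal w * DUG G Pp r)) := by
  rcases h with ⟨hm, hp⟩ | ⟨hblocks, Γ, hΓ, hskew⟩
  · exact ⟨1, fun _ ↦ one_pos, by simpa using hm, by simpa using hp⟩
  · refine ⟨fun i ↦ if (i : ℕ) < ddiff then 1 else Γ,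
      fun i ↦ by dsimp only; split_ifs <;> positivity, ?_⟩
    have key : ∀ P ∈ ({Pm, Pp} : Set (Vec d)),
        PosDefQ (-(diagonal (fun i : Fin d ↦ if (i : ℕ) < ddiff then 1 else Γ) * DUG G P r)) := by
      intro P hP
      rw [← Matrix.mul_neg]
      refine posDefQ_diagonal_mul_of_blocks hΓ (fun i j hi hj ↦ ?_) (hblocks P hP).1
        (hblocks P hP).2
      simp [hskew P i j hi hj]
    exact ⟨key Pm (by simp), key Pp (by simp)⟩

lemma HS3.exists_weighted_coercive [NeZero d] {ddiff : ℕ} {G : Vec d → ℝ → Vec d}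
    {Pm Pp : Vec d} {r : ℝ} (h : HS3 ddiff G Pm Pp r) :
    ∃ w : Vec d, (∀ i, 0 < w i) ∧ ∃ c > 0, ∀ ρ ∈ Set.Icc (0 : ℝ) 1, ∀ x : Vec d,
      c * ∑ i, w i * x i ^ 2 ≤ dotV x (-(diagonal w * DGrho G Pm Pp r ρ) *ᵥ x) := by
  obtain ⟨w, hw, hm, hp⟩ := h.exists_weights
  obtain ⟨cm, hcm, hcm'⟩ := hm.exists_coercive
  obtain ⟨cp, hcp, hcp'⟩ := hp.exists_coercive
  have hW : 0 < ∑ i, w i := Finset.sum_pos (fun i _ ↦ hw i) Finset.univ_nonempty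
  refine ⟨w, hw, min cm cp / ∑ i, w i, by positivity, fun ρ ⟨hρ0, hρ1⟩ x ↦ ?_⟩
  have hconvex : dotV x (-(diagonal w * DGrho G Pm Pp r ρ) *ᵥ x)
      = ρ * dotV x (-(diagonal w * DUG G Pm r) *ᵥ x)
        + (1 - ρ) * dotV x (-(diagonal w * DUG G Pp r) *ᵥ x) := by
    simp only [DGrho, dotV_eq_dotProduct, Matrix.mul_add, Matrix.mul_smul, neg_add, add_mulVec,
      neg_mulVec, smul_mulVec, dotProduct_add, dotProduct_neg, dotProduct_smul, smul_eq_mul]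
    ring
  have hmin : min cm cp * ‖x‖ ^ 2
      ≤ ρ * dotV x (-(diagonal w * DUG G Pm r) *ᵥ x)
        + (1 - ρ) * dotV x (-(diagonal w * DUG G Pp r) *ᵥ x) := by
    have hm' := mul_le_mul_of_nonneg_left
      ((mul_le_mul_of_nonneg_right (min_le_left cm cp) (sq_nonneg ‖x‖)).trans (hcm' x)) hρ0
    have hp' := mul_le_mul_of_nonneg_left
      ((mul_le_mul_of_nonneg_right (min_le_right cm cp) (sq_nonneg ‖x‖)).trans (hcp' x))
      (sub_nonneg.2 hρ1)
    linarith
  calc (min cm cp / ∑ i, w i) * ∑ i, w i * x i ^ 2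
      ≤ (min cm cp / ∑ i, w i) * ((∑ i, w i) * ‖x‖ ^ 2) := by
        gcongr; exact sum_mul_sq_le_sum_mul_norm_sq (fun i ↦ (hw i).le) x
    _ = min cm cp * ‖x‖ ^ 2 := by field_simp
    _ ≤ _ := hconvex ▸ hmin

lemma eq_zero_of_weighted_coercive {M : Matrix (Fin d) (Fin d) ℝ} {w : Vec d}
    (hw : ∀ i, 0 < w i) {c : ℝ}
    (hM : ∀ x : Vec d, c * ∑ i, w i * x i ^ 2 ≤ dotV x (-(diagonal w * M) *ᵥ x))
    {μ : ℂ} (hμ : -c < μ.re) {a : Vec d} (ha : ∀ i, 0 ≤ a i) {v : VecC d}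
    (hv : ∀ i, (μ + a i) * v i = ∑ j, (M i j : ℂ) * v j) : v = 0 := by
  set re : Vec d := fun i ↦ (v i).re
  set im : Vec d := fun i ↦ (v i).im
  have hquad : ∀ x : Vec d, dotV x (-(diagonal w * M) *ᵥ x) = -∑ i, w i * x i * (M *ᵥ x) i := by
    intro x
    rw [dotV_eq_dotProduct, neg_mulVec, dotProduct_neg, ← mulVec_mulVec, dotProduct]
    exact congrArg _ (Finset.sum_congr rfl fun i _ ↦ by rw [mulVec_diagonal]; ring)
  -- real part of `Σ w_i conj(v_i) (μ + a_i) v_i = Σ w_i conj(v_i) (M v)_i`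
  have hpoint : ∀ i, w i * ((μ.re + a i) * Complex.normSq (v i))
      = w i * re i * (M *ᵥ re) i + w i * im i * (M *ᵥ im) i := by
    intro i
    have hre := congrArg Complex.re (hv i)
    have him := congrArg Complex.im (hv i)
    simp only [Complex.mul_re, Complex.mul_im, Complex.add_re, Complex.add_im, Complex.ofReal_re,
      Complex.ofReal_im, Complex.re_sum, Complex.im_sum, zero_mul, sub_zero, add_zero] at hre him
    simp only [mulVec, dotProduct, Complex.normSq_apply, re, im]
    linear_combination (w i * (v i).re) * hre + (w i * (v i).im) * him
  set S := ∑ i, w i * Complex.normSq (v i)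
  have hS : 0 ≤ S := Finset.sum_nonneg fun i _ ↦ mul_nonneg (hw i).le (Complex.normSq_nonneg _)
  have hSsplit : S = ∑ i, w i * re i ^ 2 + ∑ i, w i * im i ^ 2 := by
    rw [← Finset.sum_add_distrib]
    exact Finset.sum_congr rfl fun i _ ↦ by simp only [Complex.normSq_apply, re, im]; ring
  have hupper : dotV re (-(diagonal w * M) *ᵥ re) + dotV im (-(diagonal w * M) *ᵥ im)
      ≤ -(μ.re * S) := by
    rw [hquad, hquad, ← neg_add, ← Finset.sum_add_distrib, neg_le_neg_iff, Finset.mul_sum]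
    refine Finset.sum_le_sum fun i _ ↦ ?_
    rw [← hpoint i]
    nlinarith [mul_nonneg (mul_nonneg (hw i).le (ha i)) (Complex.normSq_nonneg (v i))]
  have hS0 : S = 0 := by
    have hlower := add_le_add (hM re) (hM im)
    rw [← mul_add, ← hSsplit] at hlower
    nlinarith
  ext i
  have hterm := (Finset.sum_eq_zero_iff_of_nonneg fun j _ ↦
    mul_nonneg (hw j).le (Complex.normSq_nonneg (v j))).1 hS0 i (Finset.mem_univ i)
  simpa [(hw i).ne'] using hterm

end Coercivity

section HS1

variable {d ddiff : ℕ} {τ ν : ℝ} {α : ℕ → Vec d}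

lemma HS1.summable_abs (h : HS1 d ddiff τ α ν) (i : Fin d) :
    Summable fun m : ℕ ↦ |α (m + 1) i| := by
  refine Summable.of_nonneg_of_le (fun m ↦ abs_nonneg _) (fun m ↦ ?_) h.exp_summable
  calc |α (m + 1) i| ≤ ‖α (m + 1)‖ * 1 := by
        rw [mul_one, ← Real.norm_eq_abs]; exact norm_le_pi_norm _ i
    _ ≤ ‖α (m + 1)‖ * Real.exp (((m : ℝ) + 1) * ν) := by
        gcongr; exact Real.one_le_exp (by have := h.ν_pos; positivity)

lemma Afun_add_int_mul_two_pi (z : ℝ) (n : ℤ) (i : Fin d) :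
    Afun α (z + n * (2 * Real.pi)) i = Afun α z i := by
  refine tsum_congr fun m ↦ ?_
  have : ((m : ℝ) + 1) * (z + n * (2 * Real.pi))
      = ((m : ℝ) + 1) * z + (((m + 1 : ℕ) : ℤ) * n : ℤ) * (2 * Real.pi) := by push_cast; ring
  rw [this, Real.cos_add_int_mul_two_pi]

lemma HS1.Afun_nonneg (h : HS1 d ddiff τ α ν) (z : ℝ) (i : Fin d) : 0 ≤ Afun α z i := by
  by_cases hi : (i : ℕ) < ddiff
  · have hz' := toIcoMod_mem_Ico Real.two_pi_pos 0 z
    have hz : z = toIcoMod Real.two_pi_pos 0 z + toIcoDiv Real.two_pi_pos 0 z * (2 * Real.pi) := by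
      rw [← zsmul_eq_mul, ← self_sub_toIcoDiv_zsmul Real.two_pi_pos 0 z, sub_add_cancel]
    generalize toIcoMod Real.two_pi_pos 0 z = z' at hz hz'
    rw [hz, Afun_add_int_mul_two_pi]
    rcases hz'.1.eq_or_lt with hzero | hpos
    · simp [Afun, ← hzero]
    · exact (h.A_pos i hi z' hpos (by simpa using hz'.2)).le
  · simp [Afun, h.nondiff_zero i (not_lt.1 hi)]

end HS1

section CharOp

open Complex ZMod

variable {q : ℕ} [NeZero q]

def ZMod.valFin (j : ZMod q) : Fin (q + 1) := ⟨j.val, (ZMod.val_lt j).trans q.lt_succ_self⟩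

lemma zmodIdx_eq_valFin (hq : 0 < q) (n : ℤ) : zmodIdx q hq n = ZMod.valFin (n : ZMod q) := by
  have := ZMod.val_intCast (n := q) n
  ext
  simp only [zmodIdx, ZMod.valFin]
  omega

lemma ZMod.valFin_natCast (i : Fin q) : ZMod.valFin ((i : ℕ) : ZMod q) = Fin.castSucc i := by
  ext
  simp [ZMod.valFin, ZMod.val_natCast, Nat.mod_eq_of_lt i.isLt]

lemma ZMod.valFin_zero : ZMod.valFin (0 : ZMod q) = 0 := by
  ext
  simp [ZMod.valFin]

lemma charOp_valFin {d : ℕ} (hq : 0 < q) (τ c0 : ℝ) (α : ℕ → Vec d) (G : Vec d → ℝ → Vec d)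
    (Pm Pp : Vec d) (r ρ : ℝ) (t : ℤ) (y : ℝ) (lam : ℂ) (V : Fin (q + 1) → VecC d)
    (j : ZMod q) (i : Fin d) :
    charOp q hq τ c0 α G Pm Pp r ρ t y lam V (ZMod.valFin j) i
      = ((c0 : ℂ) * (y : ℂ) * I + lam) * V (ZMod.valFin j) i
        - (τ : ℂ) * twistedSecondDiff (fun m ↦ α (m + 1) i) y (t : ZMod q)
            (fun j' ↦ V (ZMod.valFin j') i) j
        - ∑ j', ((DGrho G Pm Pp r ρ i j' : ℝ) : ℂ) * V (ZMod.valFin j) j' := by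
  have hshift : ∀ s : ℤ, extFinC q hq V ((ZMod.valFin j : ℕ) + s)
      = V (ZMod.valFin (j + (s : ZMod q))) := fun s ↦ by
    simp [extFinC, zmodIdx_eq_valFin, ZMod.valFin]
  simp only [charOp, twistedSecondDiff, sub_eq_add_neg, hshift]
  push_cast
  rfl

lemma dft_eq_of_charOp_eq_zero {d : ℕ} (hq : 0 < q) {τ c0 : ℝ} {α : ℕ → Vec d}
    (hα : ∀ i, Summable fun m : ℕ ↦ |α (m + 1) i|) {G : Vec d → ℝ → Vec d} {Pm Pp : Vec d}
    {r ρ : ℝ} {t : ℤ} {y : ℝ} {lam : ℂ} {V : Fin (q + 1) → VecC d}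
    (hV : ∀ ζ, charOp q hq τ c0 α G Pm Pp r ρ t y lam V ζ = 0) (k : ZMod q) (i : Fin d) :
    ((c0 : ℂ) * (y : ℂ) * I + lam
        + ((2 * τ * Afun α (y + 2 * Real.pi * ((t : ZMod q) * k).val / q) i : ℝ) : ℂ))
        * 𝓕 (fun j ↦ V (ZMod.valFin j) i) k
      = ∑ j', ((DGrho G Pm Pp r ρ i j' : ℝ) : ℂ) * 𝓕 (fun j ↦ V (ZMod.valFin j) j') k := by
  set f : Fin d → ZMod q → ℂ := fun i j ↦ V (ZMod.valFin j) i
  have hzero : ((c0 : ℂ) * (y : ℂ) * I + lam) • f i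
      - (τ : ℂ) • twistedSecondDiff (fun m ↦ α (m + 1) i) y (t : ZMod q) (f i)
      - ∑ j', ((DGrho G Pm Pp r ρ i j' : ℝ) : ℂ) • f j' = 0 := by
    ext j
    have := congrFun (hV (ZMod.valFin j)) i
    rw [charOp_valFin] at this
    simpa [f] using this
  have hdft := congrFun (congrArg 𝓕 hzero) k
  simp only [map_sub, map_sum, _root_.map_smul, Pi.sub_apply, Finset.sum_apply, Pi.smul_apply,
    dft_twistedSecondDiff (hα i), map_zero, Pi.zero_apply, smul_eq_mul] at hdft
  simp only [Afun]
  push_cast at hdft ⊢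
  linear_combination hdft

end CharOp

theorem statement_5_general
    {d ddiff : ℕ} {τ ν : ℝ} {α : ℕ → Vec d} {G : Vec d → ℝ → Vec d} {Pm Pp : Vec d}
    {rbar c0 : ℝ} {U0 U0' Φp Φp' Φm Φm' : ℝ → Vec d} {lamT : ℝ}
    (hHS1 : HS1 d ddiff τ α ν)
    (hHS3 : HS3 ddiff G Pm Pp rbar)
    (hHW2 : HW2 τ c0 α G U0 U0' rbar Φp Φp' Φm Φm' lamT)
    (q : ℕ) (hq : 0 < q)
    (t : ℤ) :
    ∃ lamStar : ℝ, 0 < lamStar ∧ lamStar ≤ lamT ∧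
      ∀ lam : ℂ, -lamStar < lam.re → ∀ ρ ∈ Set.Icc (0 : ℝ) 1, ∀ y : ℝ,
        ∀ V : Fin (q + 1) → VecC d, V (Fin.last q) = V 0 →
          (∀ ζ, charOp q hq τ c0 α G Pm Pp rbar ρ t y lam V ζ = 0) →
          ∀ ζ, V ζ = 0 := by
  have : NeZero d := ⟨by have := hHS1.ddiff_pos; have := hHS1.ddiff_le; omega⟩
  have : NeZero q := ⟨hq.ne'⟩
  obtain ⟨w, hw, c, hc, hcoer⟩ := hHS3.exists_weighted_coercive
  refine ⟨min lamT c, lt_min hHW2.lamT_pos hc, min_le_left _ _,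
    fun lam hlam ρ hρ y V hper hV ↦ ?_⟩
  -- every discrete Fourier mode of `V` solves an eigenvalue problem excluded by coercivity
  have hmodes : ∀ k : ZMod q, (fun i ↦ ZMod.dft (fun j ↦ V (ZMod.valFin j) i) k) = 0 :=
    fun k ↦ eq_zero_of_weighted_coercive hw (hcoer ρ hρ)
      (by simpa using (neg_le_neg (min_le_right lamT c)).trans_lt hlam)
      (fun i ↦ mul_nonneg (mul_nonneg zero_le_two hHS1.τ_pos.le) (hHS1.Afun_nonneg _ i))
      (dft_eq_of_charOp_eq_zero hq hHS1.summable_abs hV k)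
  have hvals : ∀ j i, V (ZMod.valFin j) i = 0 := fun j i ↦ by
    have : ZMod.dft (fun j ↦ V (ZMod.valFin j) i) = 0 := funext fun k ↦ congrFun (hmodes k) i
    exact congrFun ((LinearEquiv.map_eq_zero_iff _).1 this) j
  intro ζ
  induction ζ using Fin.lastCases with
  | last => rw [hper]; ext i; simpa [ZMod.valFin_zero] using hvals 0 i
  | cast ζ => ext i; simpa [ZMod.valFin_natCast] using hvals ζ i

/-- Under (HS1), (HS2), (HS3_r̄), (HW1_r̄) and (HW2_r̄), for `q ≥ 1` and
`θ = t/q ∈ q⁻¹{1,…,q}` with `gcd(θq, q) = 1`, there exists `λ* ∈ (0, λ̃]` such that for every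
`λ ∈ ℂ` with `Re λ > −λ*`, every `ρ ∈ [0,1]` and every `y ∈ ℝ`, the characteristic operator
`Δ_{q,θ,ρ;λ}(iy)` is injective on the complexification of `ℓ²_{q,⊥;∞}`. -/
theorem statement_5
    {d ddiff : ℕ} {τ ν : ℝ} {α : ℕ → Vec d} {G : Vec d → ℝ → Vec d} {Pm Pp : Vec d}
    {rbar c0 : ℝ} {U0 U0' Φp Φp' Φm Φm' : ℝ → Vec d} {lamT : ℝ}
    (hHS1 : HS1 d ddiff τ α ν) (hHS2 : HS2 d G Pm Pp)
    (hrbar : rbar ∈ Set.Ioo (0 : ℝ) 1)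
    (hHS3 : HS3 ddiff G Pm Pp rbar)
    (hHW1 : HW1 τ α G Pm Pp rbar c0 U0 U0')
    (hHW2 : HW2 τ c0 α G U0 U0' rbar Φp Φp' Φm Φm' lamT)
    (q : ℕ) (hq : 0 < q)
    (t : ℤ) (ht1 : 1 ≤ t) (htq : t ≤ (q : ℤ)) (hgcd : Int.gcd t (q : ℤ) = 1) :
    ∃ lamStar : ℝ, 0 < lamStar ∧ lamStar ≤ lamT ∧
      ∀ lam : ℂ, -lamStar < lam.re → ∀ ρ ∈ Set.Icc (0 : ℝ) 1, ∀ y : ℝ,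
        ∀ V : Fin (q + 1) → VecC d, V (Fin.last q) = V 0 →
          (∀ ζ, charOp q hq τ c0 α G Pm Pp rbar ρ t y lam V ζ = 0) →
          ∀ ζ, V ζ = 0 :=
  statement_5_general hHS1 hHS3 hHW2 q hq t
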